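/- Fix ζ > 0 and define, for μ ≥ 0, μ⋆(ζ, μ) as the unique solution of μ⋆ = μ + n/(1 + Tr(Σ(ζI + μ⋆Σ)⁻¹)) with μ⋆ > μ. Then the function μ ↦ μ⋆(ζ, μ) is nondecreasing on [0, ∞). -/

import Mathlib

/-!
Put `F_μ(x) = (x - μ) (1 + Tr(Σ(ζI + xΣ)⁻¹))`, so that the fixed-point equation reads
`F_μ(μ⋆(μ)) = n`. Diagonalising `Σ` gives `F_μ(x) = (x - μ) + ∑ᵢ (x - μ) λᵢ / (ζ + x λᵢ)`, and each
summand is nondecreasing for `x ≥ μ`, so `F_μ` is strictly increasing on `[μ, ∞)`; moreover `F_μ(x)`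
decreases in `μ`. Hence for `μ₁ ≤ μ₂`, `μ⋆(μ₂) < μ⋆(μ₁)` would give
`n = F_{μ₂}(μ⋆(μ₂)) ≤ F_{μ₁}(μ⋆(μ₂)) < F_{μ₁}(μ⋆(μ₁)) = n`.
-/

namespace Matrix

variable {ι : Type*} [Fintype ι] [DecidableEq ι] {𝕜 : Type*} [RCLike 𝕜]

theorem inv_conjStarAlgAut (U : unitaryGroup ι 𝕜) (X : Matrix ι ι 𝕜) :
    (Unitary.conjStarAlgAut 𝕜 _ U X)⁻¹ = Unitary.conjStarAlgAut 𝕜 _ U X⁻¹ := by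
  have hU : (U : Matrix ι ι 𝕜)⁻¹ = star (U : Matrix ι ι 𝕜) :=
    inv_eq_left_inv (Unitary.coe_star_mul_self U)
  have hU' : (star (U : Matrix ι ι 𝕜))⁻¹ = U :=
    inv_eq_left_inv (Unitary.coe_mul_star_self U)
  simp only [Unitary.conjStarAlgAut_apply, mul_inv_rev, hU, hU', mul_assoc]

theorem trace_conjStarAlgAut (U : unitaryGroup ι 𝕜) (X : Matrix ι ι 𝕜) :
    (Unitary.conjStarAlgAut 𝕜 _ U X).trace = X.trace := by
  rw [Unitary.conjStarAlgAut_apply, trace_mul_cycle, Unitary.coe_star_mul_self, Matrix.one_mul]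

theorem inv_diagonal_of_ne_zero {K : Type*} [Field K] {v : ι → K} (hv : ∀ i, v i ≠ 0) :
    (diagonal v)⁻¹ = diagonal v⁻¹ :=
  inv_eq_left_inv <| by
    rw [diagonal_mul_diagonal, ← diagonal_one]
    exact congrArg diagonal (funext fun i => inv_mul_cancel₀ (hv i))

theorem trace_diagonal_mul_inv_smul_one_add_smul {K : Type*} [Field K] {d : ι → K} {a b : K}
    (hd : ∀ i, a + b * d i ≠ 0) :
    (diagonal d * (a • 1 + b • diagonal d)⁻¹).trace = ∑ i, d i / (a + b * d i) := by
  have hdiag : a • 1 + b • diagonal d = diagonal fun i => a + b * d i := by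
    rw [smul_one_eq_diagonal, ← diagonal_smul, diagonal_add]
    rfl
  rw [hdiag, inv_diagonal_of_ne_zero hd, diagonal_mul_diagonal, trace_diagonal]
  simp only [Pi.inv_apply, div_eq_mul_inv]

theorem IsHermitian.trace_mul_inv_smul_one_add_smul {A : Matrix ι ι ℝ} (hA : A.IsHermitian)
    {a b : ℝ} (hab : ∀ i, a + b * hA.eigenvalues i ≠ 0) :
    (A * (a • 1 + b • A)⁻¹).trace = ∑ i, hA.eigenvalues i / (a + b * hA.eigenvalues i) := by
  set φ := Unitary.conjStarAlgAut ℝ (Matrix ι ι ℝ) hA.eigenvectorUnitary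
  have hspec : A = φ (diagonal hA.eigenvalues) := hA.spectral_theorem
  have hB : a • 1 + b • A = φ (a • 1 + b • diagonal hA.eigenvalues) := by
    rw [map_add, map_smul, map_smul, map_one, ← hspec]
  rw [hB, inv_conjStarAlgAut, ← trace_diagonal_mul_inv_smul_one_add_smul hab]
  nth_rewrite 1 [hspec]
  rw [← map_mul, trace_conjStarAlgAut]

end Matrix

theorem monotoneOn_sub_mul_div_add_mul {μ ζ c : ℝ} (hc : 0 ≤ c) (hμ : 0 < ζ + μ * c) :
    MonotoneOn (fun x => (x - μ) * c / (ζ + x * c)) (Set.Ici μ) := by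
  intro x hx y hy hxy
  have hx' : 0 < ζ + x * c := by nlinarith [Set.mem_Ici.mp hx]
  have hy' : 0 < ζ + y * c := by nlinarith [Set.mem_Ici.mp hy]
  dsimp only
  rw [div_le_div_iff₀ hx' hy']
  nlinarith [mul_nonneg (mul_nonneg hc (sub_nonneg.2 hxy)) hμ.le]

theorem strictMonoOn_sub_mul_one_add_sum_div {ι : Type*} (s : Finset ι) {lam : ι → ℝ}
    (hlam : ∀ i, 0 ≤ lam i) {μ ζ : ℝ} (hμ : 0 ≤ μ) (hζ : 0 < ζ) :
    StrictMonoOn (fun x => (x - μ) * (1 + ∑ i ∈ s, lam i / (ζ + x * lam i))) (Set.Ici μ) := by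
  have key : StrictMonoOn (fun x => (x - μ) + ∑ i ∈ s, (x - μ) * lam i / (ζ + x * lam i))
      (Set.Ici μ) := by
    refine StrictMonoOn.add_monotone (fun x _ y _ hxy => sub_lt_sub_right hxy μ) ?_
    intro x hx y hy hxy
    exact Finset.sum_le_sum fun i _ => monotoneOn_sub_mul_div_add_mul (hlam i)
      (by nlinarith [hlam i]) hx hy hxy
  convert key using 2 with x
  simp only [mul_add, mul_one, Finset.mul_sum, mul_div_assoc]

noncomputable def fixedPointResidual {ι : Type*} [Fintype ι] [DecidableEq ι]
    (Sig : Matrix ι ι ℝ) (ζ μ x : ℝ) : ℝ :=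
  (x - μ) * (1 + (Sig * (ζ • (1 : Matrix ι ι ℝ) + x • Sig)⁻¹).trace)

namespace Matrix.PosSemidef

variable {ι : Type*} [Fintype ι] [DecidableEq ι] {Sig : Matrix ι ι ℝ} (hSig : Sig.PosSemidef)
  {ζ : ℝ} (hζ : 0 < ζ)
include hSig hζ

theorem add_mul_eigenvalues_pos {x : ℝ} (hx : 0 ≤ x) (i : ι) :
    0 < ζ + x * hSig.1.eigenvalues i :=
  add_pos_of_pos_of_nonneg hζ (mul_nonneg hx (hSig.eigenvalues_nonneg i))

theorem trace_mul_inv_smul_one_add_smul {x : ℝ} (hx : 0 ≤ x) :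
    (Sig * (ζ • 1 + x • Sig)⁻¹).trace =
      ∑ i, hSig.1.eigenvalues i / (ζ + x * hSig.1.eigenvalues i) :=
  hSig.1.trace_mul_inv_smul_one_add_smul fun i => (hSig.add_mul_eigenvalues_pos hζ hx i).ne'

theorem one_add_trace_mul_inv_pos {x : ℝ} (hx : 0 ≤ x) :
    0 < 1 + (Sig * (ζ • 1 + x • Sig)⁻¹).trace := by
  rw [hSig.trace_mul_inv_smul_one_add_smul hζ hx]
  have := Finset.sum_nonneg fun i (_ : i ∈ Finset.univ) =>
    div_nonneg (hSig.eigenvalues_nonneg i) (hSig.add_mul_eigenvalues_pos hζ hx i).le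
  linarith

theorem strictMonoOn_fixedPointResidual {μ : ℝ} (hμ : 0 ≤ μ) :
    StrictMonoOn (fixedPointResidual Sig ζ μ) (Set.Ici μ) :=
  (strictMonoOn_sub_mul_one_add_sum_div Finset.univ hSig.eigenvalues_nonneg hμ hζ).congr
    fun x hx => by
      rw [fixedPointResidual, hSig.trace_mul_inv_smul_one_add_smul hζ (hμ.trans hx)]

theorem fixedPointResidual_le_of_le {μ₁ μ₂ x : ℝ} (h : μ₁ ≤ μ₂) (hx : 0 ≤ x) :
    fixedPointResidual Sig ζ μ₂ x ≤ fixedPointResidual Sig ζ μ₁ x := by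
  unfold fixedPointResidual
  gcongr
  exact (hSig.one_add_trace_mul_inv_pos hζ hx).le

theorem fixedPointResidual_eq {μ x c : ℝ} (hx : 0 ≤ x)
    (h : x = μ + c / (1 + (Sig * (ζ • 1 + x • Sig)⁻¹).trace)) :
    fixedPointResidual Sig ζ μ x = c := by
  rw [fixedPointResidual, ← eq_div_iff (hSig.one_add_trace_mul_inv_pos hζ hx).ne',
    sub_eq_iff_eq_add']
  exact h

end Matrix.PosSemidef

theorem stmt7_general {d : ℕ} (Sig : Matrix (Fin d) (Fin d) ℝ) (hSig : Sig.PosSemidef)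
    (n : ℕ) (ζ : ℝ) (hζ : 0 < ζ)
    (mst : ℝ → ℝ)
    (hfix : ∀ μ : ℝ, 0 ≤ μ → μ < mst μ ∧
      mst μ = μ + (n : ℝ) /
        (1 + (Sig * (ζ • (1 : Matrix (Fin d) (Fin d) ℝ) + mst μ • Sig)⁻¹).trace)) :
    MonotoneOn mst (Set.Ici (0 : ℝ)) := by
  intro μ₁ (h₁ : 0 ≤ μ₁) μ₂ (h₂ : 0 ≤ μ₂) h12
  by_contra! hlt
  obtain ⟨hlt₁, heq₁⟩ := hfix μ₁ h₁
  obtain ⟨hlt₂, heq₂⟩ := hfix μ₂ h₂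
  have hm₂ : μ₁ ≤ mst μ₂ := h12.trans hlt₂.le
  have : (n : ℝ) < n := calc
    (n : ℝ) = fixedPointResidual Sig ζ μ₂ (mst μ₂) :=
      (hSig.fixedPointResidual_eq hζ (h₁.trans hm₂) heq₂).symm
    _ ≤ fixedPointResidual Sig ζ μ₁ (mst μ₂) :=
      hSig.fixedPointResidual_le_of_le hζ h12 (h₁.trans hm₂)
    _ < fixedPointResidual Sig ζ μ₁ (mst μ₁) :=
      hSig.strictMonoOn_fixedPointResidual hζ h₁ hm₂ hlt₁.le hlt
    _ = n := hSig.fixedPointResidual_eq hζ (h₁.trans hlt₁.le) heq₁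
  exact lt_irrefl _ this

/-- if for every `μ ≥ 0`, `mst μ` is the solution `> μ` of the fixed
point equation `μ⋆ = μ + n/(1 + Tr(Σ(ζI + μ⋆Σ)⁻¹))`, then `μ ↦ mst μ` is
nondecreasing on `[0,∞)`. -/
theorem stmt7 {d : ℕ} (Sig : Matrix (Fin d) (Fin d) ℝ) (hSig : Sig.PosSemidef)
    (n : ℕ) (hn : 0 < n) (ζ : ℝ) (hζ : 0 < ζ)
    (mst : ℝ → ℝ)
    (hfix : ∀ μ : ℝ, 0 ≤ μ → μ < mst μ ∧
      mst μ = μ + (n : ℝ) /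
        (1 + (Sig * (ζ • (1 : Matrix (Fin d) (Fin d) ℝ) + mst μ • Sig)⁻¹).trace)) :
    MonotoneOn mst (Set.Ici (0 : ℝ)) :=
  stmt7_general Sig hSig n ζ hζ mst hfix
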